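/- arXiv:2405.05344 — 2 statements merged into one kernel-verified Lean document; each statement's English description precedes it below -/
import Mathlib

section
/- Let $w$ be standard normal and define the soft thresholding risk $r(\mu;\tau) = \mathbb{E}(\eta_\tau(\mu + w) - \mu)^2$ where $\eta_\tau(x) = \mathrm{sign}(x)(|x|-\tau)_+$. Then $r(\mu;\tau) \le 1 + \tau^2$ for all $\mu \in \mathbb{R}$ and $\tau \ge 0$. -/
/- Write `p x ∈ [-τ, τ]` for the projection of `x`; then `η_τ(x) = x - p x`, so
`η_τ(μ + w) - μ = w - p(μ + w)` and `(w - p(μ + w))² ≤ w² + τ² - 2 w p(μ + w)`.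
Since `p` is monotone, `w p(μ + w) ≥ w p(μ)`, whose expectation vanishes for centred noise.
Hence the risk is at most `E w² + τ²`, for any centred noise with a finite second moment. -/

open MeasureTheory ProbabilityTheory

/-- The soft thresholding function `η_τ(x) = sign(x)(|x| - τ)₊`. -/
noncomputable def softThreshold (τ x : ℝ) : ℝ :=
  Real.sign x * max (|x| - τ) 0

open Set

lemma softThreshold_eq_sub_projIcc {τ : ℝ} (hτ : 0 ≤ τ) (x : ℝ) :
    softThreshold τ x = x - projIcc (-τ) τ (neg_le_self hτ) x := by
  rw [softThreshold, coe_projIcc]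
  rcases lt_trichotomy x 0 with hx | rfl | hx
  · rw [Real.sign_of_neg hx, abs_of_neg hx, max_def, min_def, max_def]
    split_ifs <;> linarith
  · simp [hτ]
  · rw [Real.sign_of_pos hx, abs_of_pos hx, max_def, min_def, max_def]
    split_ifs <;> linarith

lemma sq_softThreshold_add_sub_le {τ : ℝ} (hτ : 0 ≤ τ) (μ w : ℝ) :
    (softThreshold τ (μ + w) - μ) ^ 2
      ≤ w ^ 2 + τ ^ 2 - 2 * (projIcc (-τ) τ (neg_le_self hτ) μ : ℝ) * w := by
  set p := projIcc (-τ) τ (neg_le_self hτ)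
  have hp : Monotone fun x => (p x : ℝ) := (Subtype.mono_coe _).comp (monotone_projIcc _)
  have hmono : 0 ≤ w * ((p (μ + w) : ℝ) - p μ) := by
    rcases le_total 0 w with hw | hw
    · exact mul_nonneg hw (sub_nonneg.2 (hp (by linarith)))
    · exact mul_nonneg_of_nonpos_of_nonpos hw (sub_nonpos.2 (hp (by linarith)))
  have hsq : (p (μ + w) : ℝ) ^ 2 ≤ τ ^ 2 := sq_le_sq' (p (μ + w)).2.1 (p (μ + w)).2.2
  rw [softThreshold_eq_sub_projIcc hτ]
  nlinarith

theorem integral_sq_softThreshold_add_sub_le {P : Measure ℝ} [IsProbabilityMeasure P]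
    (hP : MemLp id 2 P) (hmean : ∫ w, w ∂P = 0) {τ : ℝ} (hτ : 0 ≤ τ) (μ : ℝ) :
    ∫ w, (softThreshold τ (μ + w) - μ) ^ 2 ∂P ≤ ∫ w, w ^ 2 ∂P + τ ^ 2 := by
  set c : ℝ := (projIcc (-τ) τ (neg_le_self hτ) μ : ℝ)
  have hsq : Integrable (fun w : ℝ => w ^ 2) P := hP.integrable_sq
  have hquad : Integrable (fun w : ℝ => w ^ 2 + τ ^ 2) P := hsq.add (integrable_const _)
  have hlin : Integrable (fun w : ℝ => 2 * c * w) P :=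
    (hP.integrable one_le_two).const_mul (2 * c)
  calc ∫ w, (softThreshold τ (μ + w) - μ) ^ 2 ∂P
      ≤ ∫ w, (w ^ 2 + τ ^ 2 - 2 * c * w) ∂P :=
        integral_mono_of_nonneg (.of_forall fun _ => sq_nonneg _)
          (hquad.sub hlin)
          (.of_forall (sq_softThreshold_add_sub_le hτ μ))
    _ = ∫ w, w ^ 2 ∂P + τ ^ 2 := by
        rw [integral_sub hquad hlin, integral_add hsq (integrable_const _), integral_const_mul,
          hmean]
        simp

theorem integral_sq_gaussianReal_zero (v : NNReal) : ∫ w, w ^ 2 ∂gaussianReal 0 v = v := by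
  rw [← variance_of_integral_eq_zero aemeasurable_id' integral_id_gaussianReal,
    variance_fun_id_gaussianReal]

/-- The soft thresholding risk satisfies `r(μ; τ) = E(η_τ(μ + w) - μ)² ≤ 1 + τ²`
for `w` standard normal. -/
theorem softThreshold_risk_le (μ τ : ℝ) (hτ : 0 ≤ τ) :
    ∫ w, (softThreshold τ (μ + w) - μ) ^ 2 ∂(gaussianReal 0 1) ≤ 1 + τ ^ 2 := by
  have h := integral_sq_softThreshold_add_sub_le (P := gaussianReal 0 1)
    (memLp_id_gaussianReal 2) integral_id_gaussianReal hτ μ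
  rwa [integral_sq_gaussianReal_zero, NNReal.coe_one] at h
end

section
/- Let $w$ be standard normal and define $r(0;\tau) = \mathbb{E}(\eta_\tau(w))^2$ where $\eta_\tau(x) = \mathrm{sign}(x)(|x|-\tau)_+$. Then $r(0;\tau) \le e^{-\tau^2/2}$ for all $\tau \ge 0$. -/
open MeasureTheory ProbabilityTheory

/-!
Since at most one of `x - τ`, `-x - τ` is positive, `η_τ(x)² = (x - τ)₊² + (-x - τ)₊²`, and by
the symmetry of the centred Gaussian the risk is `2 E (w - τ)₊²`. After the shift `x = y + τ`, the
density satisfies `φ(y + τ) ≤ e^{-τ²/2} φ(y)` for `y ≥ 0`, because `(y + τ)² ≥ y² + τ²`; hence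
`2 E (w - τ)₊² ≤ e^{-τ²/2} · 2 E w₊² = e^{-τ²/2} E w² = e^{-τ²/2}`. Working with lower Lebesgue
integrals avoids all integrability side conditions.
-/

open Real
open scoped NNReal ENNReal

lemma softThreshold_zero_left (x : ℝ) : softThreshold 0 x = x := by
  rcases lt_trichotomy x 0 with h | rfl | h
  · simp [softThreshold, Real.sign_of_neg h, abs_of_neg h, h.le]
  · simp [softThreshold]
  · simp [softThreshold, Real.sign_of_pos h, abs_of_pos h, h.le]

lemma softThreshold_sq {τ : ℝ} (hτ : 0 ≤ τ) (x : ℝ) :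
    softThreshold τ x ^ 2 = max (x - τ) 0 ^ 2 + max (-x - τ) 0 ^ 2 := by
  rcases lt_trichotomy x 0 with h | rfl | h
  · rw [softThreshold, Real.sign_of_neg h, abs_of_neg h,
      max_eq_right (by linarith : x - τ ≤ 0)]
    ring
  · simp [softThreshold, hτ]
  · rw [softThreshold, Real.sign_of_pos h, abs_of_pos h,
      max_eq_right (by linarith : -x - τ ≤ 0)]
    ring

section

variable {v : ℝ≥0}

instance instIsNegInvariantGaussianRealZero : (gaussianReal 0 v).IsNegInvariant :=
  ⟨by rw [Measure.neg_def, gaussianReal_map_neg, neg_zero]⟩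

lemma gaussianPDFReal_add_le {x y : ℝ} (hxy : 0 ≤ x * y) :
    gaussianPDFReal 0 v (x + y) ≤ exp (-y ^ 2 / (2 * v)) * gaussianPDFReal 0 v x := by
  simp only [gaussianPDFReal_def, sub_zero]
  rw [mul_left_comm, ← exp_add]
  gcongr
  rw [← add_div, ← neg_add, neg_div, neg_div]
  gcongr
  nlinarith

lemma gaussianPDF_add_le {x y : ℝ} (hxy : 0 ≤ x * y) :
    gaussianPDF 0 v (x + y) ≤ ENNReal.ofReal (exp (-y ^ 2 / (2 * v))) * gaussianPDF 0 v x := by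
  rw [gaussianPDF, gaussianPDF, ← ENNReal.ofReal_mul (exp_pos _).le]
  exact ENNReal.ofReal_le_ofReal (gaussianPDFReal_add_le hxy)

lemma lintegral_ofReal_sq_gaussianReal :
    ∫⁻ x, ENNReal.ofReal (x ^ 2) ∂gaussianReal 0 v = v := by
  have hvar := variance_fun_id_gaussianReal (μ := 0) (v := v)
  rw [variance_eq_integral aemeasurable_id'] at hvar
  simp only [integral_id_gaussianReal, sub_zero] at hvar
  have hint : Integrable (fun x : ℝ => x ^ 2) (gaussianReal 0 v) :=
    (memLp_id_gaussianReal 2).integrable_sq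
  rw [← ofReal_integral_eq_lintegral_ofReal hint (ae_of_all _ fun x => sq_nonneg x), hvar,
    ENNReal.ofReal_coe_nnreal]

lemma lintegral_comp_sub_gaussianReal_le (hv : v ≠ 0) {τ : ℝ} (hτ : 0 ≤ τ)
    {g : ℝ → ℝ≥0∞} (hg : Measurable g) (hg_neg : ∀ y < 0, g y = 0) :
    ∫⁻ x, g (x - τ) ∂gaussianReal 0 v
      ≤ ENNReal.ofReal (exp (-τ ^ 2 / (2 * v))) * ∫⁻ x, g x ∂gaussianReal 0 v := by
  have hpdf := measurable_gaussianPDF 0 v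
  rw [gaussianReal_of_var_ne_zero 0 hv]
  calc ∫⁻ x, g (x - τ) ∂volume.withDensity (gaussianPDF 0 v)
      = ∫⁻ x, gaussianPDF 0 v x * g (x - τ) :=
        lintegral_withDensity_eq_lintegral_mul _ hpdf (g := fun x => g (x - τ)) (by fun_prop)
    _ = ∫⁻ y, gaussianPDF 0 v (y + τ) * g y := by
        simpa using lintegral_sub_right_eq_self (fun y => gaussianPDF 0 v (y + τ) * g y) τ
    _ ≤ ∫⁻ y, ENNReal.ofReal (exp (-τ ^ 2 / (2 * v))) * (gaussianPDF 0 v y * g y) := by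
        refine lintegral_mono fun y => ?_
        rcases lt_or_ge y 0 with hy | hy
        · simp [hg_neg y hy]
        · rw [← mul_assoc]
          gcongr
          exact gaussianPDF_add_le (mul_nonneg hy hτ)
    _ = ENNReal.ofReal (exp (-τ ^ 2 / (2 * v)))
          * ∫⁻ x, g x ∂volume.withDensity (gaussianPDF 0 v) := by
        rw [lintegral_withDensity_eq_lintegral_mul _ hpdf hg,
          ← lintegral_const_mul _ (hpdf.mul hg)]
        rfl

lemma lintegral_softThreshold_sq_gaussianReal {τ : ℝ} (hτ : 0 ≤ τ) :
    ∫⁻ x, ENNReal.ofReal (softThreshold τ x ^ 2) ∂gaussianReal 0 v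
      = 2 * ∫⁻ x, ENNReal.ofReal (max (x - τ) 0 ^ 2) ∂gaussianReal 0 v := by
  simp_rw [softThreshold_sq hτ, ENNReal.ofReal_add (sq_nonneg _) (sq_nonneg _)]
  rw [lintegral_add_left (by fun_prop), two_mul]
  congr 1
  exact lintegral_neg_eq_self (fun x => ENNReal.ofReal (max (x - τ) 0 ^ 2))

lemma lintegral_softThreshold_sq_gaussianReal_le (hv : v ≠ 0) {τ : ℝ} (hτ : 0 ≤ τ) :
    ∫⁻ x, ENNReal.ofReal (softThreshold τ x ^ 2) ∂gaussianReal 0 v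
      ≤ ENNReal.ofReal (v * exp (-τ ^ 2 / (2 * v))) := by
  -- `η_0` is the identity, so the case `τ = 0` reads `v = 2 E w₊²`.
  have hsq := lintegral_softThreshold_sq_gaussianReal (v := v) le_rfl
  simp only [softThreshold_zero_left, sub_zero, lintegral_ofReal_sq_gaussianReal] at hsq
  rw [lintegral_softThreshold_sq_gaussianReal hτ, mul_comm (v : ℝ),
    ENNReal.ofReal_mul (exp_pos _).le, ENNReal.ofReal_coe_nnreal, hsq, mul_left_comm]
  gcongr
  exact lintegral_comp_sub_gaussianReal_le hv hτ (by fun_prop) fun y hy => by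
    simp [max_eq_right hy.le]

end

/-- The soft thresholding risk at the origin satisfies `r(0; τ) = E(η_τ(w))² ≤ e^{-τ²/2}`
for `w` standard normal. -/
theorem softThreshold_risk_at_zero_le (τ : ℝ) (hτ : 0 ≤ τ) :
    ∫ w, (softThreshold τ w) ^ 2 ∂(gaussianReal 0 1) ≤ Real.exp (-τ ^ 2 / 2) := by
  have hmeas : AEStronglyMeasurable (fun w => softThreshold τ w ^ 2) (gaussianReal 0 1) := by
    simp_rw [softThreshold_sq hτ]
    fun_prop
  rw [integral_eq_lintegral_of_nonneg_ae (ae_of_all _ fun w => sq_nonneg _) hmeas]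
  refine ENNReal.toReal_le_of_le_ofReal (exp_pos _).le ?_
  simpa using lintegral_softThreshold_sq_gaussianReal_le one_ne_zero hτ
end
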